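/- arXiv:1905.08087 — 7 statements merged into one kernel-verified Lean document; each statement's English description precedes it below -/
import Mathlib

section
/- One-step variational lower bound (core of the ROMMEO lower bound, Eq. 6–7): for every opponent model ρ and conditional policy π, log(∑_{b∈B} ∑_{a∈A} P(b)·exp(R(a,b))) ≥ ∑_{b∈B} ρ(b)·( ∑_{a∈A} π(b,a)·(R(a,b) − log(π(b,a))) − log(ρ(b)/P(b)) ). That is, the expected reward plus the entropy of the conditional policy minus the KL divergence of the opponent model from the prior is a lower bound on the log normalizer. -/
/-- One-step variational lower bound (core of the ROMMEO lower bound):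
for every opponent model ρ and conditional policy π, the expected reward plus the
entropy of the conditional policy minus the KL divergence of the opponent model from
the prior is a lower bound on the log normalizer. -/
theorem rommeo_one_step_variational_lower_bound
    {A B : Type*} [Fintype A] [Fintype B] [Nonempty A] [Nonempty B]
    (R : A × B → ℝ) (P : B → ℝ) (π : B → A → ℝ) (ρ : B → ℝ)
    (hP_pos : ∀ b, 0 < P b) (hP_sum : ∑ b, P b = 1)
    (hπ_nonneg : ∀ b a, 0 ≤ π b a) (hπ_sum : ∀ b, ∑ a, π b a = 1)
    (hρ_nonneg : ∀ b, 0 ≤ ρ b) (hρ_sum : ∑ b, ρ b = 1) :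
    Real.log (∑ b, ∑ a, P b * Real.exp (R (a, b)))
      ≥ ∑ b, ρ b * ((∑ a, π b a * (R (a, b) - Real.log (π b a)))
          - Real.log (ρ b / P b)) := by
  classical
  set S : ℝ := ∑ b, ∑ a, P b * Real.exp (R (a, b)) with hSdef
  have hf_pos : ∀ (b : B) (a : A), 0 < P b * Real.exp (R (a, b)) := fun b a =>
    mul_pos (hP_pos b) (Real.exp_pos _)
  have hS_pos : 0 < S := by
    refine Finset.sum_pos (fun b _ => Finset.sum_pos (fun a _ => hf_pos b a)
      Finset.univ_nonempty) Finset.univ_nonempty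
  -- termwise bound
  have hterm : ∀ (b : B) (a : A),
      ρ b * π b a * (R (a, b) - Real.log (π b a) - Real.log (ρ b / P b))
        ≤ P b * Real.exp (R (a, b)) / S - ρ b * π b a + ρ b * π b a * Real.log S := by
    intro b a
    rcases eq_or_lt_of_le (mul_nonneg (hρ_nonneg b) (hπ_nonneg b a)) with hq | hq
    · rw [← hq]
      have : 0 < P b * Real.exp (R (a, b)) / S := div_pos (hf_pos b a) hS_pos
      simp only [zero_mul, mul_zero]
      linarith
    · have hρb : 0 < ρ b := by
        rcases (hρ_nonneg b).lt_or_eq with h | h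
        · exact h
        · exfalso; rw [← h, zero_mul] at hq; exact lt_irrefl 0 hq
      have hπb : 0 < π b a := by
        rcases (hπ_nonneg b a).lt_or_eq with h | h
        · exact h
        · exfalso; rw [← h, mul_zero] at hq; exact lt_irrefl 0 hq
      have key : ρ b * π b a * (R (a, b) - Real.log (π b a) - Real.log (ρ b / P b))
          = (ρ b * π b a) *
              Real.log (P b * Real.exp (R (a, b)) / (S * (ρ b * π b a)))
            + (ρ b * π b a) * Real.log S := by
        rw [Real.log_div (hf_pos b a).ne' (mul_ne_zero hS_pos.ne' hq.ne'),
          Real.log_mul (hP_pos b).ne' (Real.exp_ne_zero _), Real.log_exp,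
          Real.log_mul hS_pos.ne' hq.ne', Real.log_mul hρb.ne' hπb.ne',
          Real.log_div hρb.ne' (hP_pos b).ne']
        ring
      have h1 : Real.log (P b * Real.exp (R (a, b)) / (S * (ρ b * π b a)))
          ≤ P b * Real.exp (R (a, b)) / (S * (ρ b * π b a)) - 1 :=
        Real.log_le_sub_one_of_pos (div_pos (hf_pos b a) (mul_pos hS_pos hq))
      have h2 := mul_le_mul_of_nonneg_left h1 hq.le
      have h3 : (ρ b * π b a) * (P b * Real.exp (R (a, b)) / (S * (ρ b * π b a)) - 1)
          = P b * Real.exp (R (a, b)) / S - ρ b * π b a := by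
        field_simp
      rw [key]
      linarith [h2, h3.le]
  -- rewrite RHS as a double sum
  have hRHS : ∑ b, ρ b * ((∑ a, π b a * (R (a, b) - Real.log (π b a)))
          - Real.log (ρ b / P b))
      = ∑ b, ∑ a, ρ b * π b a * (R (a, b) - Real.log (π b a) - Real.log (ρ b / P b)) := by
    refine Finset.sum_congr rfl fun b _ => ?_
    have : ∑ a, ρ b * π b a * (R (a, b) - Real.log (π b a) - Real.log (ρ b / P b))
        = ∑ a, (ρ b * (π b a * (R (a, b) - Real.log (π b a)))
            - ρ b * Real.log (ρ b / P b) * π b a) := by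
      refine Finset.sum_congr rfl fun a _ => ?_; ring
    rw [this, Finset.sum_sub_distrib, ← Finset.mul_sum, ← Finset.mul_sum, hπ_sum b,
      mul_one]
    ring
  -- sum of the upper bounds equals log S
  have hsum : ∑ b, ∑ a, (P b * Real.exp (R (a, b)) / S - ρ b * π b a
        + ρ b * π b a * Real.log S) = Real.log S := by
    have h1 : ∑ b, ∑ a, P b * Real.exp (R (a, b)) / S = 1 := by
      simp_rw [← Finset.sum_div]
      rw [← hSdef, div_self hS_pos.ne']
    have h2 : ∑ b, ∑ a, ρ b * π b a = 1 := by
      simp_rw [← Finset.mul_sum, hπ_sum, mul_one]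
      exact hρ_sum
    have h3 : ∑ b, ∑ a, ρ b * π b a * Real.log S = Real.log S := by
      have hb : ∀ b : B, ∑ a, ρ b * π b a * Real.log S = ρ b * Real.log S := by
        intro b
        rw [← Finset.sum_mul, ← Finset.mul_sum, hπ_sum, mul_one]
      simp_rw [hb, ← Finset.sum_mul, hρ_sum, one_mul]
    simp_rw [Finset.sum_add_distrib, Finset.sum_sub_distrib]
    rw [h1, h2, h3]
    ring
  rw [ge_iff_le, hRHS, ← hsum]
  exact Finset.sum_le_sum fun b _ => Finset.sum_le_sum fun a _ => hterm b a
end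

section
/- One-step form of Theorem 1 (optimal conditional policy and opponent model): fix Q : A × B → ℝ, α > 0, and a prior P on B with P(b) > 0. Define the objective J(π,ρ) = ∑_b ρ(b)·( ∑_a π(b,a)·(Q(a,b) − α·log π(b,a)) − log(ρ(b)/P(b)) ) over conditional policies π and opponent models ρ. Then for all (π,ρ), J(π,ρ) ≤ V := log(∑_b P(b)·(∑_a exp(Q(a,b)/α))^α), and equality holds for the pair π*(b,a) = exp(Q(a,b)/α)/∑_{a'} exp(Q(a',b)/α) and ρ*(b) = P(b)·(∑_a exp(Q(a,b)/α))^α / exp(V). Hence (π*, ρ*) maximizes J with maximum value V. -/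
/-!
Both maximizations are instances of Gibbs' variational principle: for a probability vector `w`
and positive weights `q`, `∑ wᵢ (log qᵢ - log wᵢ) ≤ log ∑ qᵢ`, with equality at `w = q / ∑ q`
(termwise, this is `log x ≤ x - 1`). For fixed `b` the policy term is `α` times this functional
with `q_a = exp(Q(a,b)/α)`, so it is at most `α log Z_b` with `Z_b = ∑_a exp(Q(a,b)/α)`, and
the softmax policy attains it. Substituting this bound leaves the same functional for `ρ` with
`q_b = P(b) Z_b^α`, whose log-sum is `V`; it is attained at `ρ*`.
-/

/-- The one-step ROMMEO objective
J(π,ρ) = ∑_b ρ(b)·( ∑_a π(b,a)·(Q(a,b) − α·log π(b,a)) − log(ρ(b)/P(b)) ). -/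
noncomputable def rommeoObjective {A B : Type*} [Fintype A] [Fintype B]
    (Q : A × B → ℝ) (α : ℝ) (P : B → ℝ) (π : B → A → ℝ) (ρ : B → ℝ) : ℝ :=
  ∑ b, ρ b * ((∑ a, π b a * (Q (a, b) - α * Real.log (π b a)))
      - Real.log (ρ b / P b))

/-- The soft value V = log ∑_b P(b)·(∑_a exp(Q(a,b)/α))^α. -/
noncomputable def rommeoValue {A B : Type*} [Fintype A] [Fintype B]
    (Q : A × B → ℝ) (α : ℝ) (P : B → ℝ) : ℝ :=
  Real.log (∑ b, P b * (∑ a, Real.exp (Q (a, b) / α)) ^ α)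

open Finset

section Gibbs

open Real

lemma mul_log_sub_log_le_sub {w q : ℝ} (hw : 0 ≤ w) (hq : 0 < q) :
    w * (log q - log w) ≤ q - w := by
  rcases hw.eq_or_lt with rfl | hw
  · simpa using hq.le
  calc w * (log q - log w) = w * log (q / w) := by rw [log_div hq.ne' hw.ne']
    _ ≤ w * (q / w - 1) := mul_le_mul_of_nonneg_left (log_le_sub_one_of_pos (div_pos hq hw)) hw.le
    _ = q - w := by field_simp

variable {ι : Type*} [Fintype ι]

noncomputable def negKL (w q : ι → ℝ) : ℝ :=
  ∑ i, w i * (log (q i) - log (w i))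

variable {w q : ι → ℝ}

theorem negKL_le_log_sum (hw : ∀ i, 0 ≤ w i) (hw1 : ∑ i, w i = 1) (hq : ∀ i, 0 < q i) :
    negKL w q ≤ log (∑ i, q i) := by
  set S := ∑ i, q i
  have hne : (univ : Finset ι).Nonempty := nonempty_of_sum_ne_zero (by rw [hw1]; exact one_ne_zero)
  have hS : 0 < S := sum_pos (fun i _ => hq i) hne
  have hterm : ∀ i, w i * (log (q i) - log (w i)) ≤ q i / S - w i + w i * log S := by
    intro i
    have h := mul_log_sub_log_le_sub (hw i) (div_pos (hq i) hS)
    rw [log_div (hq i).ne' hS.ne'] at h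
    linarith
  calc negKL w q ≤ ∑ i, (q i / S - w i + w i * log S) := sum_le_sum fun i _ => hterm i
    _ = log S := by
      rw [sum_add_distrib, sum_sub_distrib, ← sum_div, ← sum_mul, hw1, div_self hS.ne']
      ring

theorem negKL_div_sum_eq_log_sum (hq : ∀ i, 0 < q i) [Nonempty ι] :
    negKL (fun i => q i / ∑ j, q j) q = log (∑ i, q i) := by
  set S := ∑ i, q i
  have hS : 0 < S := sum_pos (fun i _ => hq i) univ_nonempty
  calc negKL (fun i => q i / S) q = ∑ i, q i / S * log S := by
        refine sum_congr rfl fun i _ => ?_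
        rw [log_div (hq i).ne' hS.ne', sub_sub_cancel]
    _ = log S := by rw [← sum_mul, ← sum_div, div_self hS.ne', one_mul]

end Gibbs

section Rommeo

open Real

variable {A B : Type*} [Fintype A] (Q : A × B → ℝ) (α : ℝ) (P : B → ℝ)

/-- The unnormalized optimal opponent model `ρ*`. -/
noncomputable def rommeoWeight (b : B) : ℝ :=
  P b * (∑ a, exp (Q (a, b) / α)) ^ α

lemma rommeoWeight_pos [Nonempty A] (hP : ∀ b, 0 < P b) (b : B) : 0 < rommeoWeight Q α P b :=
  mul_pos (hP b) (rpow_pos_of_pos (sum_pos (fun _ _ => exp_pos _) univ_nonempty) α)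

lemma exp_rommeoValue [Fintype B] [Nonempty A] [Nonempty B] (hP : ∀ b, 0 < P b) :
    exp (rommeoValue Q α P) = ∑ b, rommeoWeight Q α P b :=
  exp_log (sum_pos (fun b _ => rommeoWeight_pos Q α P hP b) univ_nonempty)

lemma rommeoObjective_eq_sum_negKL [Fintype B] (hα : α ≠ 0) (hP : ∀ b, P b ≠ 0) (p : B → A → ℝ)
    (ρ : B → ℝ) :
    rommeoObjective Q α P p ρ =
      ∑ b, ρ b * (α * negKL (p b) (fun a => exp (Q (a, b) / α)) + log (P b) - log (ρ b)) := by
  refine sum_congr rfl fun b _ => ?_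
  rcases eq_or_ne (ρ b) 0 with h | h
  · simp [h]
  have hinner : ∑ a, p b a * (Q (a, b) - α * log (p b a))
      = α * negKL (p b) (fun a => exp (Q (a, b) / α)) := by
    rw [negKL, mul_sum]
    refine sum_congr rfl fun a _ => ?_
    rw [log_exp]
    field_simp
  rw [hinner, log_div h (hP b)]
  ring

lemma mul_negKL_add_log_le_log_rommeoWeight (hα : 0 < α) [Nonempty A] {b : B} (hP : 0 < P b)
    {p : A → ℝ} (hp : ∀ a, 0 ≤ p a) (hp1 : ∑ a, p a = 1) :
    α * negKL p (fun a => exp (Q (a, b) / α)) + log (P b) ≤ log (rommeoWeight Q α P b) := by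
  have hZ : 0 < ∑ a, exp (Q (a, b) / α) := sum_pos (fun a _ => exp_pos _) univ_nonempty
  have hKL := negKL_le_log_sum hp hp1 fun a => exp_pos (Q (a, b) / α)
  rw [rommeoWeight, log_mul hP.ne' (rpow_pos_of_pos hZ α).ne', log_rpow hZ]
  linarith [mul_le_mul_of_nonneg_left hKL hα.le]

lemma mul_negKL_softmax_add_log_eq_log_rommeoWeight [Nonempty A] {b : B} (hP : 0 < P b) :
    α * negKL (fun a => exp (Q (a, b) / α) / ∑ a', exp (Q (a', b) / α))
        (fun a => exp (Q (a, b) / α)) + log (P b) = log (rommeoWeight Q α P b) := by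
  have hZ : 0 < ∑ a, exp (Q (a, b) / α) := sum_pos (fun a _ => exp_pos _) univ_nonempty
  rw [negKL_div_sum_eq_log_sum fun a => exp_pos (Q (a, b) / α), rommeoWeight,
    log_mul hP.ne' (rpow_pos_of_pos hZ α).ne', log_rpow hZ]
  ring

end Rommeo

theorem rommeo_one_step_optimal_policy_and_opponent_model_general
    {A B : Type*} [Fintype A] [Fintype B] [Nonempty A] [Nonempty B]
    (Q : A × B → ℝ) (α : ℝ) (hα : 0 < α)
    (P : B → ℝ) (hP_pos : ∀ b, 0 < P b) :
    (∀ (π : B → A → ℝ) (ρ : B → ℝ),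
        (∀ b a, 0 ≤ π b a) → (∀ b, ∑ a, π b a = 1) →
        (∀ b, 0 ≤ ρ b) → (∑ b, ρ b = 1) →
        rommeoObjective Q α P π ρ ≤ rommeoValue Q α P)
    ∧ rommeoObjective Q α P
        (fun b a => Real.exp (Q (a, b) / α) / ∑ a', Real.exp (Q (a', b) / α))
        (fun b => P b * (∑ a, Real.exp (Q (a, b) / α)) ^ α
            / Real.exp (rommeoValue Q α P))
      = rommeoValue Q α P := by
  have hw := rommeoWeight_pos Q α P hP_pos
  simp only [rommeoObjective_eq_sum_negKL Q α P hα.ne' fun b => (hP_pos b).ne']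
  refine ⟨fun π ρ hπ0 hπ1 hρ0 hρ1 => ?_, ?_⟩
  · calc _ ≤ negKL ρ (rommeoWeight Q α P) := sum_le_sum fun b _ =>
          mul_le_mul_of_nonneg_left (sub_le_sub_right
            (mul_negKL_add_log_le_log_rommeoWeight Q α P hα (hP_pos b) (hπ0 b) (hπ1 b)) _) (hρ0 b)
      _ ≤ rommeoValue Q α P := negKL_le_log_sum hρ0 hρ1 hw
  · calc _ = negKL (fun b => rommeoWeight Q α P b / ∑ b', rommeoWeight Q α P b')
          (rommeoWeight Q α P) := by
          rw [exp_rommeoValue Q α P hP_pos]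
          refine sum_congr rfl fun b _ => ?_
          rw [mul_negKL_softmax_add_log_eq_log_rommeoWeight Q α P (hP_pos b)]
          rfl
      _ = rommeoValue Q α P := negKL_div_sum_eq_log_sum hw

/-- One-step form of Theorem 1 (optimal conditional policy and opponent
model): J(π,ρ) ≤ V for all conditional policies π and opponent models ρ, and
equality holds at π*(b,a) = exp(Q(a,b)/α)/∑_{a'} exp(Q(a',b)/α) and
ρ*(b) = P(b)·(∑_a exp(Q(a,b)/α))^α / exp(V).  Hence (π*,ρ*) maximizes J with
maximum value V. -/
theorem rommeo_one_step_optimal_policy_and_opponent_model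
    {A B : Type*} [Fintype A] [Fintype B] [Nonempty A] [Nonempty B]
    (Q : A × B → ℝ) (α : ℝ) (hα : 0 < α)
    (P : B → ℝ) (hP_pos : ∀ b, 0 < P b) (hP_sum : ∑ b, P b = 1) :
    (∀ (π : B → A → ℝ) (ρ : B → ℝ),
        (∀ b a, 0 ≤ π b a) → (∀ b, ∑ a, π b a = 1) →
        (∀ b, 0 ≤ ρ b) → (∑ b, ρ b = 1) →
        rommeoObjective Q α P π ρ ≤ rommeoValue Q α P)
    ∧ rommeoObjective Q α P
        (fun b a => Real.exp (Q (a, b) / α) / ∑ a', Real.exp (Q (a', b) / α))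
        (fun b => P b * (∑ a, Real.exp (Q (a, b) / α)) ^ α
            / Real.exp (rommeoValue Q α P))
      = rommeoValue Q α P :=
  rommeo_one_step_optimal_policy_and_opponent_model_general Q α hα P hP_pos
end

section
/- Nonexpansiveness of the soft value map: let α > 0 and let P : S → B → ℝ be a prior (P(s,b) > 0 and ∑_b P(s,b) = 1 for each s). Define V_α(Q)(s) = log(∑_b P(s,b)·(∑_a exp(Q(s,a,b)/α))^α) for Q : S × A × B → ℝ. Then for any Q₁, Q₂ : S × A × B → ℝ and any s ∈ S, |V_α(Q₁)(s) − V_α(Q₂)(s)| ≤ max_{(s',a,b)} |Q₁(s',a,b) − Q₂(s',a,b)|. -/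
/-- The soft value map V_α(Q)(s) = log ∑_b P(s,b)·(∑_a exp(Q(s,a,b)/α))^α. -/
noncomputable def softValue {S A B : Type*} [Fintype A] [Fintype B]
    (α : ℝ) (P : S → B → ℝ) (Q : S × A × B → ℝ) (s : S) : ℝ :=
  Real.log (∑ b, P s b * (∑ a, Real.exp (Q (s, a, b) / α)) ^ α)

lemma softValue_le_add {S A B : Type*} [Fintype A] [Fintype B]
    [Nonempty A] [Nonempty B]
    (α : ℝ) (hα : 0 < α)
    (P : S → B → ℝ) (hP_pos : ∀ s b, 0 < P s b)
    (Q₁ Q₂ : S × A × B → ℝ) (s : S) (M : ℝ)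
    (hM : ∀ x, Q₁ x - Q₂ x ≤ M) :
    softValue α P Q₁ s ≤ softValue α P Q₂ s + M := by
  have hinner_pos : ∀ (Q : S × A × B → ℝ) (b : B),
      0 < (∑ a, Real.exp (Q (s, a, b) / α)) ^ α := by
    intro Q b
    apply Real.rpow_pos_of_pos
    exact Finset.sum_pos (fun a _ => Real.exp_pos _) Finset.univ_nonempty
  have hsum_pos : ∀ (Q : S × A × B → ℝ),
      0 < ∑ b, P s b * (∑ a, Real.exp (Q (s, a, b) / α)) ^ α := by
    intro Q
    exact Finset.sum_pos (fun b _ => mul_pos (hP_pos s b) (hinner_pos Q b))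
      Finset.univ_nonempty
  have key : ∑ b, P s b * (∑ a, Real.exp (Q₁ (s, a, b) / α)) ^ α
      ≤ Real.exp M * ∑ b, P s b * (∑ a, Real.exp (Q₂ (s, a, b) / α)) ^ α := by
    rw [Finset.mul_sum]
    apply Finset.sum_le_sum
    intro b _
    have h1 : (∑ a, Real.exp (Q₁ (s, a, b) / α)) ^ α
        ≤ (Real.exp (M / α) * ∑ a, Real.exp (Q₂ (s, a, b) / α)) ^ α := by
      apply Real.rpow_le_rpow
      · exact Finset.sum_nonneg fun a _ => (Real.exp_pos _).le
      · rw [Finset.mul_sum]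
        apply Finset.sum_le_sum
        intro a _
        rw [← Real.exp_add, ← add_div]
        apply Real.exp_le_exp.2
        exact div_le_div_of_nonneg_right (by linarith [hM (s, a, b)]) hα.le
      · exact hα.le
    have h2 : (Real.exp (M / α) * ∑ a, Real.exp (Q₂ (s, a, b) / α)) ^ α
        = Real.exp M * (∑ a, Real.exp (Q₂ (s, a, b) / α)) ^ α := by
      rw [Real.mul_rpow (Real.exp_pos _).le
        (Finset.sum_nonneg fun a _ => (Real.exp_pos _).le),
        ← Real.exp_log (Real.exp_pos (M / α)), ← Real.exp_mul, Real.log_exp,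
        div_mul_cancel₀ _ hα.ne']
    calc P s b * (∑ a, Real.exp (Q₁ (s, a, b) / α)) ^ α
        ≤ P s b * (Real.exp (M / α) * ∑ a, Real.exp (Q₂ (s, a, b) / α)) ^ α :=
          mul_le_mul_of_nonneg_left h1 (hP_pos s b).le
      _ = Real.exp M * (P s b * (∑ a, Real.exp (Q₂ (s, a, b) / α)) ^ α) := by
          rw [h2]; ring
  unfold softValue
  calc Real.log (∑ b, P s b * (∑ a, Real.exp (Q₁ (s, a, b) / α)) ^ α)
      ≤ Real.log (Real.exp M * ∑ b, P s b * (∑ a, Real.exp (Q₂ (s, a, b) / α)) ^ α) :=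
        Real.log_le_log (hsum_pos Q₁) key
    _ = Real.log (∑ b, P s b * (∑ a, Real.exp (Q₂ (s, a, b) / α)) ^ α) + M := by
        rw [Real.log_mul (Real.exp_ne_zero M) (hsum_pos Q₂).ne', Real.log_exp]
        ring

/-- Nonexpansiveness of the soft value map: for any Q₁, Q₂ and any
state s, |V_α(Q₁)(s) − V_α(Q₂)(s)| ≤ max_{(s',a,b)} |Q₁(s',a,b) − Q₂(s',a,b)|. -/
theorem softValue_nonexpansive
    {S A B : Type*} [Fintype S] [Fintype A] [Fintype B]
    [Nonempty S] [Nonempty A] [Nonempty B]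
    (α : ℝ) (hα : 0 < α)
    (P : S → B → ℝ) (hP_pos : ∀ s b, 0 < P s b) (hP_sum : ∀ s, ∑ b, P s b = 1)
    (Q₁ Q₂ : S × A × B → ℝ) (s : S) :
    |softValue α P Q₁ s - softValue α P Q₂ s|
      ≤ Finset.univ.sup' Finset.univ_nonempty
          (fun x : S × A × B => |Q₁ x - Q₂ x|) := by
  set M := Finset.univ.sup' Finset.univ_nonempty
      (fun x : S × A × B => |Q₁ x - Q₂ x|) with hMdef
  have hbound : ∀ x : S × A × B, |Q₁ x - Q₂ x| ≤ M := fun x =>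
    Finset.le_sup' (fun x : S × A × B => |Q₁ x - Q₂ x|) (Finset.mem_univ x)
  rw [abs_sub_le_iff]
  constructor
  · have := softValue_le_add α hα P hP_pos Q₁ Q₂ s M
      (fun x => (le_abs_self _).trans (hbound x))
    linarith
  · have := softValue_le_add α hα P hP_pos Q₂ Q₁ s M
      (fun x => by have := hbound x; rw [abs_sub_comm] at this
                   exact (le_abs_self _).trans this)
    linarith
end

section
/- Contraction of the soft Bellman operator (key step of Theorem 3): let α > 0, γ ∈ [0,1), R : S × A × B → ℝ, a transition kernel p, and a prior P. Define (𝒯Q)(s,a,b) = R(s,a,b) + γ·∑_{s'} p(s,a,b,s')·log(∑_{b'} P(s',b')·(∑_{a'} exp(Q(s',a',b')/α))^α). Then for all Q₁, Q₂ : S × A × B → ℝ, max_{(s,a,b)} |(𝒯Q₁)(s,a,b) − (𝒯Q₂)(s,a,b)| ≤ γ·max_{(s,a,b)} |Q₁(s,a,b) − Q₂(s,a,b)|; i.e., 𝒯 is a γ-contraction in the sup norm. -/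
/-- The soft Bellman operator
(𝒯Q)(s,a,b) = R(s,a,b) + γ·∑_{s'} p(s,a,b,s')·log ∑_{b'} P(s',b')·(∑_{a'} exp(Q(s',a',b')/α))^α. -/
noncomputable def softBellman {S A B : Type*} [Fintype S] [Fintype A] [Fintype B]
    (α γ : ℝ) (R : S × A × B → ℝ) (p : S → A → B → S → ℝ) (P : S → B → ℝ)
    (Q : S × A × B → ℝ) : S × A × B → ℝ :=
  fun x => R x + γ * ∑ s', p x.1 x.2.1 x.2.2 s' *
    Real.log (∑ b', P s' b' * (∑ a', Real.exp (Q (s', a', b') / α)) ^ α)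

lemma logsum_shift_le {A B : Type*} [Fintype A] [Fintype B] [Nonempty A] [Nonempty B]
    (α : ℝ) (hα : 0 < α) (Pb : B → ℝ) (hP : ∀ b, 0 < Pb b)
    (f g : A → B → ℝ) (M : ℝ) (hM : ∀ a b, f a b ≤ g a b + M) :
    Real.log (∑ b, Pb b * (∑ a, Real.exp (f a b / α)) ^ α)
      ≤ Real.log (∑ b, Pb b * (∑ a, Real.exp (g a b / α)) ^ α) + M := by
  have hpos : ∀ h : A → B → ℝ, 0 < ∑ b, Pb b * (∑ a, Real.exp (h a b / α)) ^ α := by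
    intro h
    refine Finset.sum_pos (fun b _ => mul_pos (hP b) (Real.rpow_pos_of_pos ?_ _))
      Finset.univ_nonempty
    exact Finset.sum_pos (fun a _ => Real.exp_pos _) Finset.univ_nonempty
  have key : ∑ b, Pb b * (∑ a, Real.exp (f a b / α)) ^ α
      ≤ Real.exp M * ∑ b, Pb b * (∑ a, Real.exp (g a b / α)) ^ α := by
    rw [Finset.mul_sum]
    apply Finset.sum_le_sum
    intro b _
    have h1 : (∑ a, Real.exp (f a b / α)) ^ α
        ≤ (Real.exp (M / α) * ∑ a, Real.exp (g a b / α)) ^ α := by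
      apply Real.rpow_le_rpow (Finset.sum_nonneg fun a _ => (Real.exp_pos _).le) _ hα.le
      rw [Finset.mul_sum]
      apply Finset.sum_le_sum
      intro a _
      rw [← Real.exp_add]
      apply Real.exp_le_exp.mpr
      rw [← add_div, add_comm]
      exact div_le_div_of_nonneg_right (hM a b) hα.le |>.trans_eq (by ring_nf)
    have h2 : (Real.exp (M / α) * ∑ a, Real.exp (g a b / α)) ^ α
        = Real.exp M * (∑ a, Real.exp (g a b / α)) ^ α := by
      rw [Real.mul_rpow (Real.exp_pos _).le
        (Finset.sum_nonneg fun a _ => (Real.exp_pos _).le), ← Real.exp_mul,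
        div_mul_cancel₀ _ hα.ne']
    calc Pb b * (∑ a, Real.exp (f a b / α)) ^ α
        ≤ Pb b * (Real.exp M * (∑ a, Real.exp (g a b / α)) ^ α) := by
          rw [← h2]; exact mul_le_mul_of_nonneg_left h1 (hP b).le
      _ = Real.exp M * (Pb b * (∑ a, Real.exp (g a b / α)) ^ α) := by ring
  calc Real.log (∑ b, Pb b * (∑ a, Real.exp (f a b / α)) ^ α)
      ≤ Real.log (Real.exp M * ∑ b, Pb b * (∑ a, Real.exp (g a b / α)) ^ α) :=
        Real.log_le_log (hpos f) key
    _ = Real.log (∑ b, Pb b * (∑ a, Real.exp (g a b / α)) ^ α) + M := by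
        rw [Real.log_mul (Real.exp_ne_zero _) (hpos g).ne', Real.log_exp]; ring

/-- Contraction of the soft Bellman operator: 𝒯 is a γ-contraction
in the sup norm. -/
theorem softBellman_contraction
    {S A B : Type*} [Fintype S] [Fintype A] [Fintype B]
    [Nonempty S] [Nonempty A] [Nonempty B]
    (α γ : ℝ) (hα : 0 < α) (hγ₀ : 0 ≤ γ) (hγ₁ : γ < 1)
    (R : S × A × B → ℝ)
    (p : S → A → B → S → ℝ)
    (hp_nonneg : ∀ s a b s', 0 ≤ p s a b s') (hp_sum : ∀ s a b, ∑ s', p s a b s' = 1)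
    (P : S → B → ℝ) (hP_pos : ∀ s b, 0 < P s b) (hP_sum : ∀ s, ∑ b, P s b = 1)
    (Q₁ Q₂ : S × A × B → ℝ) :
    Finset.univ.sup' Finset.univ_nonempty
        (fun x : S × A × B => |softBellman α γ R p P Q₁ x - softBellman α γ R p P Q₂ x|)
      ≤ γ * Finset.univ.sup' Finset.univ_nonempty
          (fun x : S × A × B => |Q₁ x - Q₂ x|) := by
  set M := Finset.univ.sup' Finset.univ_nonempty (fun x : S × A × B => |Q₁ x - Q₂ x|) with hMdef
  set L : (S × A × B → ℝ) → S → ℝ := fun Q s' =>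
    Real.log (∑ b', P s' b' * (∑ a', Real.exp (Q (s', a', b') / α)) ^ α) with hLdef
  have habs : ∀ x : S × A × B, |Q₁ x - Q₂ x| ≤ M := fun x =>
    Finset.le_sup' (fun x : S × A × B => |Q₁ x - Q₂ x|) (Finset.mem_univ x)
  have hL : ∀ s', |L Q₁ s' - L Q₂ s'| ≤ M := by
    intro s'
    rw [abs_sub_le_iff]
    constructor
    · have := logsum_shift_le α hα (P s') (hP_pos s') (fun a b => Q₁ (s', a, b))
        (fun a b => Q₂ (s', a, b)) M (fun a b => by
          have := habs (s', a, b); rw [abs_le] at this; linarith [this.2])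
      simp only [hLdef]; linarith [this]
    · have := logsum_shift_le α hα (P s') (hP_pos s') (fun a b => Q₂ (s', a, b))
        (fun a b => Q₁ (s', a, b)) M (fun a b => by
          have := habs (s', a, b); rw [abs_le] at this; linarith [this.1])
      simp only [hLdef]; linarith [this]
  apply Finset.sup'_le
  intro x _
  have hexp : softBellman α γ R p P Q₁ x - softBellman α γ R p P Q₂ x
      = γ * ∑ s', p x.1 x.2.1 x.2.2 s' * (L Q₁ s' - L Q₂ s') := by
    simp only [softBellman, hLdef, mul_sub, Finset.sum_sub_distrib, Finset.mul_sum]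
    ring
  rw [hexp, abs_mul, abs_of_nonneg hγ₀]
  apply mul_le_mul_of_nonneg_left _ hγ₀
  calc |∑ s', p x.1 x.2.1 x.2.2 s' * (L Q₁ s' - L Q₂ s')|
      ≤ ∑ s', |p x.1 x.2.1 x.2.2 s' * (L Q₁ s' - L Q₂ s')| := Finset.abs_sum_le_sum_abs _ _
    _ ≤ ∑ s', p x.1 x.2.1 x.2.2 s' * M := by
        apply Finset.sum_le_sum
        intro s' _
        rw [abs_mul, abs_of_nonneg (hp_nonneg _ _ _ _)]
        exact mul_le_mul_of_nonneg_left (hL s') (hp_nonneg _ _ _ _)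
    _ = M := by rw [← Finset.sum_mul, hp_sum, one_mul]
end

section
/- Theorem 3 (convergence of ROMMEO Q-iteration): let α > 0, γ ∈ [0,1), R : S × A × B → ℝ, a transition kernel p, and a prior P, and let 𝒯 be the soft Bellman operator (𝒯Q)(s,a,b) = R(s,a,b) + γ·∑_{s'} p(s,a,b,s')·log(∑_{b'} P(s',b')·(∑_{a'} exp(Q(s',a',b')/α))^α). Then 𝒯 has a unique fixed point Q* : S × A × B → ℝ, and for every initial Q₀ : S × A × B → ℝ the iterates Q_{k+1} = 𝒯Q_k converge to Q* (uniformly, i.e., max_{(s,a,b)} |Q_k(s,a,b) − Q*(s,a,b)| → 0 as k → ∞); correspondingly V_α(Q_k)(s) = log(∑_b P(s,b)·(∑_a exp(Q_k(s,a,b)/α))^α) converges to V_α(Q*)(s) for every s. -/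
open Real Finset

lemma dist_pi_eq_sup'_abs_sub {ι : Type*} [Fintype ι] [Nonempty ι] (f g : ι → ℝ) :
    dist f g = univ.sup' univ_nonempty (fun i => |f i - g i|) :=
  le_antisymm (dist_pi_le_iff'.2 fun i => (Real.dist_eq _ _).trans_le (le_sup' (fun i => |f i - g i|) (mem_univ i)))
    (sup'_le _ _ fun i _ => (Real.dist_eq _ _).symm.trans_le (dist_le_pi_dist f g i))

lemma lipschitzWith_one_of_monotone_of_map_add_const {ι : Type*} [Fintype ι]
    {V : (ι → ℝ) → ℝ} (hmono : Monotone V) (hadd : ∀ Q c, V (fun i => Q i + c) = V Q + c) :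
    LipschitzWith 1 V :=
  LipschitzWith.of_le_add fun Q Q' =>
    calc V Q ≤ V (fun i => Q' i + dist Q Q') := hmono fun i => by
          have h := (Real.dist_eq _ _).symm.trans_le (dist_le_pi_dist Q Q' i)
          linarith [le_abs_self (Q i - Q' i)]
      _ = V Q' + dist Q Q' := hadd Q' _

lemma abs_sum_mul_sub_sum_mul_le {ι : Type*} (s : Finset ι) {w u v : ι → ℝ} {r : ℝ}
    (hw : ∀ i ∈ s, 0 ≤ w i) (hw_sum : ∑ i ∈ s, w i = 1) (huv : ∀ i ∈ s, |u i - v i| ≤ r) :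
    |∑ i ∈ s, w i * u i - ∑ i ∈ s, w i * v i| ≤ r :=
  calc |∑ i ∈ s, w i * u i - ∑ i ∈ s, w i * v i|
      = |∑ i ∈ s, w i * (u i - v i)| := by simp only [mul_sub, sum_sub_distrib]
    _ ≤ ∑ i ∈ s, |w i * (u i - v i)| := abs_sum_le_sum_abs _ _
    _ ≤ ∑ i ∈ s, w i * r := sum_le_sum fun i hi => by
        rw [abs_mul, abs_of_nonneg (hw i hi)]
        exact mul_le_mul_of_nonneg_left (huv i hi) (hw i hi)
    _ = r := by rw [← sum_mul, hw_sum, one_mul]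

section softValue

variable {S A B : Type*} [Fintype A] [Fintype B] [Nonempty A] [Nonempty B]
  {α : ℝ} {P : S → B → ℝ}

lemma sum_mul_rpow_sum_exp_pos (hP : ∀ s b, 0 < P s b) (Q : S × A × B → ℝ) (s : S) :
    0 < ∑ b, P s b * (∑ a, exp (Q (s, a, b) / α)) ^ α :=
  sum_pos (fun b _ => mul_pos (hP s b)
    (rpow_pos_of_pos (sum_pos (fun _ _ => exp_pos _) univ_nonempty) _)) univ_nonempty

lemma softValue_mono (hα : 0 ≤ α) (hP : ∀ s b, 0 < P s b) (s : S) :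
    Monotone fun Q : S × A × B → ℝ => softValue α P Q s := fun Q Q' hQ => by
  refine log_le_log (sum_mul_rpow_sum_exp_pos hP Q s) (sum_le_sum fun b _ => ?_)
  gcongr
  · exact (hP s b).le
  · exact hQ _

lemma softValue_add_const (hα : α ≠ 0) (hP : ∀ s b, 0 < P s b)
    (Q : S × A × B → ℝ) (c : ℝ) (s : S) :
    softValue α P (fun x => Q x + c) s = softValue α P Q s + c := by
  have hshift : ∀ b, (∑ a, exp ((Q (s, a, b) + c) / α)) ^ α =
      exp c * (∑ a, exp (Q (s, a, b) / α)) ^ α := fun b => by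
    simp only [add_div, exp_add, ← sum_mul]
    rw [mul_rpow (sum_nonneg fun a _ => (exp_pos _).le) (exp_pos _).le, ← exp_mul,
      div_mul_cancel₀ c hα, mul_comm]
  simp only [softValue, hshift, mul_left_comm (P s _), ← mul_sum]
  rw [log_mul (exp_pos c).ne' (sum_mul_rpow_sum_exp_pos hP Q s).ne', log_exp, add_comm]

lemma lipschitzWith_softValue [Fintype S] (hα : 0 < α) (hP : ∀ s b, 0 < P s b) (s : S) :
    LipschitzWith 1 fun Q : S × A × B → ℝ => softValue α P Q s :=
  lipschitzWith_one_of_monotone_of_map_add_const (softValue_mono hα.le hP s)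
    fun Q c => softValue_add_const hα.ne' hP Q c s

end softValue

section softBellman

variable {S A B : Type*} [Fintype S] [Fintype A] [Fintype B]
  {α γ : ℝ} {R : S × A × B → ℝ} {p : S → A → B → S → ℝ} {P : S → B → ℝ}

lemma softBellman_apply (Q : S × A × B → ℝ) (x : S × A × B) :
    softBellman α γ R p P Q x = R x + γ * ∑ s', p x.1 x.2.1 x.2.2 s' * softValue α P Q s' :=
  rfl

lemma contractingWith_softBellman [Nonempty A] [Nonempty B] (hα : 0 < α) (hγ₀ : 0 ≤ γ) (hγ₁ : γ < 1)
    (hp_nonneg : ∀ s a b s', 0 ≤ p s a b s') (hp_sum : ∀ s a b, ∑ s', p s a b s' = 1)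
    (hP : ∀ s b, 0 < P s b) :
    ContractingWith ⟨γ, hγ₀⟩ (softBellman α γ R p P) := by
  refine ⟨hγ₁, LipschitzWith.of_dist_le_mul fun Q Q' =>
    (dist_pi_le_iff (mul_nonneg hγ₀ dist_nonneg)).2 fun x => ?_⟩
  have hV : ∀ s', |softValue α P Q s' - softValue α P Q' s'| ≤ dist Q Q' := fun s' => by
    simpa [Real.dist_eq] using (lipschitzWith_softValue hα hP s').dist_le_mul Q Q'
  rw [Real.dist_eq, softBellman_apply, softBellman_apply, add_sub_add_left_eq_sub, ← mul_sub,
    abs_mul, abs_of_nonneg hγ₀]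
  exact mul_le_mul_of_nonneg_left (abs_sum_mul_sub_sum_mul_le _ (fun s' _ => hp_nonneg _ _ _ s')
    (hp_sum _ _ _) fun s' _ => hV s') hγ₀

end softBellman

theorem rommeo_q_iteration_convergence_general
    {S A B : Type*} [Fintype S] [Fintype A] [Fintype B]
    [Nonempty S] [Nonempty A] [Nonempty B]
    (α γ : ℝ) (hα : 0 < α) (hγ₀ : 0 ≤ γ) (hγ₁ : γ < 1)
    (R : S × A × B → ℝ)
    (p : S → A → B → S → ℝ)
    (hp_nonneg : ∀ s a b s', 0 ≤ p s a b s') (hp_sum : ∀ s a b, ∑ s', p s a b s' = 1)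
    (P : S → B → ℝ) (hP_pos : ∀ s b, 0 < P s b) :
    ∃ Qstar : S × A × B → ℝ,
      softBellman α γ R p P Qstar = Qstar
      ∧ (∀ Q : S × A × B → ℝ, softBellman α γ R p P Q = Q → Q = Qstar)
      ∧ (∀ Q₀ : S × A × B → ℝ,
          Filter.Tendsto
            (fun k => Finset.univ.sup' Finset.univ_nonempty
              (fun x : S × A × B => |(softBellman α γ R p P)^[k] Q₀ x - Qstar x|))
            Filter.atTop (nhds 0))
      ∧ (∀ (Q₀ : S × A × B → ℝ) (s : S),
          Filter.Tendsto
            (fun k => softValue α P ((softBellman α γ R p P)^[k] Q₀) s)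
            Filter.atTop (nhds (softValue α P Qstar s))) := by
  have hT : ContractingWith ⟨γ, hγ₀⟩ (softBellman α γ R p P) :=
    contractingWith_softBellman hα hγ₀ hγ₁ hp_nonneg hp_sum hP_pos
  refine ⟨ContractingWith.fixedPoint _ hT, hT.fixedPoint_isFixedPt,
    fun Q hQ => hT.fixedPoint_unique hQ, fun Q₀ => ?_, fun Q₀ s => ?_⟩
  · simp_rw [← dist_pi_eq_sup'_abs_sub]
    exact tendsto_iff_dist_tendsto_zero.1 (hT.tendsto_iterate_fixedPoint Q₀)
  · exact ((lipschitzWith_softValue hα hP_pos s).continuous.tendsto _).comp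
      (hT.tendsto_iterate_fixedPoint Q₀)

/-- Theorem 3 (convergence of ROMMEO Q-iteration): the soft Bellman
operator has a unique fixed point Q*, the iterates Q_{k+1} = 𝒯Q_k converge to Q*
uniformly from any initialization Q₀, and correspondingly V_α(Q_k)(s) → V_α(Q*)(s)
for every s. -/
theorem rommeo_q_iteration_convergence
    {S A B : Type*} [Fintype S] [Fintype A] [Fintype B]
    [Nonempty S] [Nonempty A] [Nonempty B]
    (α γ : ℝ) (hα : 0 < α) (hγ₀ : 0 ≤ γ) (hγ₁ : γ < 1)
    (R : S × A × B → ℝ)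
    (p : S → A → B → S → ℝ)
    (hp_nonneg : ∀ s a b s', 0 ≤ p s a b s') (hp_sum : ∀ s a b, ∑ s', p s a b s' = 1)
    (P : S → B → ℝ) (hP_pos : ∀ s b, 0 < P s b) (hP_sum : ∀ s, ∑ b, P s b = 1) :
    ∃ Qstar : S × A × B → ℝ,
      softBellman α γ R p P Qstar = Qstar
      ∧ (∀ Q : S × A × B → ℝ, softBellman α γ R p P Q = Q → Q = Qstar)
      ∧ (∀ Q₀ : S × A × B → ℝ,
          Filter.Tendsto
            (fun k => Finset.univ.sup' Finset.univ_nonempty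
              (fun x : S × A × B => |(softBellman α γ R p P)^[k] Q₀ x - Qstar x|))
            Filter.atTop (nhds 0))
      ∧ (∀ (Q₀ : S × A × B → ℝ) (s : S),
          Filter.Tendsto
            (fun k => softValue α P ((softBellman α γ R p P)^[k] Q₀) s)
            Filter.atTop (nhds (softValue α P Qstar s))) :=
  rommeo_q_iteration_convergence_general α γ hα hγ₀ hγ₁ R p hp_nonneg hp_sum P hP_pos
end

section
/- Greedy-pair consistency (Theorem 2, soft Bellman equation): for any Q : S × A × B → ℝ, define the greedy conditional policy π_Q(s,b,a) = exp(Q(s,a,b)/α)/∑_{a'} exp(Q(s,a',b)/α) and the greedy opponent model ρ_Q(s,b) = P(s,b)·(∑_a exp(Q(s,a,b)/α))^α / ∑_{b'} P(s,b')·(∑_a exp(Q(s,a,b')/α))^α. Then (𝒯_{π_Q,ρ_Q}Q)(s,a,b) = (𝒯Q)(s,a,b) for all (s,a,b), where 𝒯 is the soft Bellman operator and 𝒯_{π,ρ} is the policy-evaluation operator. -/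
/-- The policy-evaluation operator
(𝒯_{π,ρ}Q)(s,a,b) = R(s,a,b) + γ·∑_{s'} p(s,a,b,s')·( ∑_{b'} ρ(s',b')·( ∑_{a'}
π(s',b',a')·(Q(s',a',b') − α·log π(s',b',a')) ) − ∑_{b'} ρ(s',b')·log(ρ(s',b')/P(s',b')) ). -/
noncomputable def evalOp {S A B : Type*} [Fintype S] [Fintype A] [Fintype B]
    (α γ : ℝ) (R : S × A × B → ℝ) (p : S → A → B → S → ℝ) (P : S → B → ℝ)
    (π : S → B → A → ℝ) (ρ : S → B → ℝ)
    (Q : S × A × B → ℝ) : S × A × B → ℝ :=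
  fun x => R x + γ * ∑ s', p x.1 x.2.1 x.2.2 s' *
    ((∑ b', ρ s' b' *
        (∑ a', π s' b' a' * (Q (s', a', b') - α * Real.log (π s' b' a'))))
      - ∑ b', ρ s' b' * Real.log (ρ s' b' / P s' b'))

/-- The greedy conditional policy π_Q(s,b,a) = exp(Q(s,a,b)/α)/∑_{a'} exp(Q(s,a',b)/α). -/
noncomputable def greedyPolicy {S A B : Type*} [Fintype A]
    (α : ℝ) (Q : S × A × B → ℝ) : S → B → A → ℝ :=
  fun s b a => Real.exp (Q (s, a, b) / α) / ∑ a', Real.exp (Q (s, a', b) / α)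

/-- The greedy opponent model
ρ_Q(s,b) = P(s,b)·(∑_a exp(Q(s,a,b)/α))^α / ∑_{b'} P(s,b')·(∑_a exp(Q(s,a,b')/α))^α. -/
noncomputable def greedyOpponent {S A B : Type*} [Fintype A] [Fintype B]
    (α : ℝ) (P : S → B → ℝ) (Q : S × A × B → ℝ) : S → B → ℝ :=
  fun s b => P s b * (∑ a, Real.exp (Q (s, a, b) / α)) ^ α
    / ∑ b', P s b' * (∑ a, Real.exp (Q (s, a, b') / α)) ^ α


/-! Both regularised averages are averages of constants. The greedy policy is the Gibbs
distribution of `Q(s', ·, b') / α`, so `Q - α log π_Q` equals `α log E(b')` for every action,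
where `E(b') = ∑ₐ exp (Q(s', a, b') / α)`; and `ρ_Q` is the prior tilted by `E^α`, so
`α log E - log (ρ_Q / P)` equals the log of the normaliser `∑_b P(s', b) E(b)^α`. -/

open Finset Real

lemma Real.log_rpow_of_nonneg {x : ℝ} (hx : 0 ≤ x) {y : ℝ} (hy : y ≠ 0) :
    log (x ^ y) = y * log x := by
  rcases hx.eq_or_lt with rfl | hx
  · simp [zero_rpow hy]
  · exact log_rpow hx y

lemma Real.div_self_mul_log (x : ℝ) : x / x * log x = log x := by
  rcases eq_or_ne x 0 with rfl | hx
  · simp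
  · rw [div_self hx, one_mul]

section Gibbs

variable {ι : Type*} [Fintype ι]

theorem sum_softmax_mul_sub_log_softmax {α : ℝ} (hα : α ≠ 0) (q : ι → ℝ) :
    ∑ i, (exp (q i / α) / ∑ j, exp (q j / α)) *
        (q i - α * log (exp (q i / α) / ∑ j, exp (q j / α)))
      = α * log (∑ i, exp (q i / α)) := by
  set E := ∑ j, exp (q j / α)
  have hconst : ∀ i, q i - α * log (exp (q i / α) / E) = α * log E := fun i => by
    have hE : 0 < E := (exp_pos _).trans_le
      (single_le_sum (fun j _ => (exp_pos (q j / α)).le) (mem_univ i))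
    rw [log_div (exp_pos _).ne' hE.ne', log_exp]
    field_simp
    ring
  simp_rw [hconst, ← sum_mul, ← sum_div]
  rw [← mul_assoc, mul_comm _ α, mul_assoc, div_self_mul_log]

theorem sum_tilted_mul_log_sub_log_div {P c : ι → ℝ} (hP : ∀ i, 0 ≤ P i) (hc : ∀ i, 0 ≤ c i) :
    ∑ i, (P i * c i / ∑ j, P j * c j) * log (c i)
        - ∑ i, (P i * c i / ∑ j, P j * c j) * log ((P i * c i / ∑ j, P j * c j) / P i)
      = log (∑ i, P i * c i) := by
  set Z := ∑ j, P j * c j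
  have hterm : ∀ i, P i * c i / Z * log (c i) - P i * c i / Z * log (P i * c i / Z / P i)
      = P i * c i / Z * log Z := fun i => by
    rcases (mul_nonneg (hP i) (hc i)).eq_or_lt with h0 | hpos
    · simp [← h0]
    have hZ : 0 < Z := hpos.trans_le
      (single_le_sum (fun j _ => mul_nonneg (hP j) (hc j)) (mem_univ i))
    have hPi : P i ≠ 0 := fun h => by simp [h] at hpos
    have hci : c i ≠ 0 := fun h => by simp [h] at hpos
    have hratio : P i * c i / Z / P i = c i / Z := by field_simp
    rw [hratio, log_div hci hZ.ne']
    ring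
  rw [← sum_sub_distrib]
  simp_rw [hterm, ← sum_mul, ← sum_div]
  exact div_self_mul_log Z

end Gibbs

theorem greedy_pair_consistency_general
    {S A B : Type*} [Fintype S] [Fintype A] [Fintype B]
    (α γ : ℝ) (hα : 0 < α)
    (R : S × A × B → ℝ)
    (p : S → A → B → S → ℝ)
    (P : S → B → ℝ) (hP_pos : ∀ s b, 0 < P s b)
    (Q : S × A × B → ℝ) :
    ∀ x : S × A × B,
      evalOp α γ R p P (greedyPolicy α Q) (greedyOpponent α P Q) Q x
        = softBellman α γ R p P Q x := by
  intro x
  unfold evalOp softBellman greedyPolicy greedyOpponent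
  congr 2
  refine sum_congr rfl fun s' _ => ?_
  congr 1
  simp_rw [sum_softmax_mul_sub_log_softmax hα.ne', ← log_rpow_of_nonneg
    (sum_nonneg fun a _ => (exp_pos _).le) hα.ne']
  exact sum_tilted_mul_log_sub_log_div (fun b => (hP_pos s' b).le)
    fun b => rpow_nonneg (sum_nonneg fun a _ => (exp_pos _).le) α

/-- Greedy-pair consistency (Theorem 2, soft Bellman equation): for
any Q, the policy-evaluation backup under the greedy pair (π_Q, ρ_Q) coincides with
the soft Bellman backup: (𝒯_{π_Q,ρ_Q}Q)(s,a,b) = (𝒯Q)(s,a,b) for all (s,a,b). -/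
theorem greedy_pair_consistency
    {S A B : Type*} [Fintype S] [Fintype A] [Fintype B]
    [Nonempty S] [Nonempty A] [Nonempty B]
    (α γ : ℝ) (hα : 0 < α) (hγ₀ : 0 ≤ γ) (hγ₁ : γ < 1)
    (R : S × A × B → ℝ)
    (p : S → A → B → S → ℝ)
    (hp_nonneg : ∀ s a b s', 0 ≤ p s a b s') (hp_sum : ∀ s a b, ∑ s', p s a b s' = 1)
    (P : S → B → ℝ) (hP_pos : ∀ s b, 0 < P s b) (hP_sum : ∀ s, ∑ b, P s b = 1)
    (Q : S × A × B → ℝ) :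
    ∀ x : S × A × B,
      evalOp α γ R p P (greedyPolicy α Q) (greedyOpponent α P Q) Q x
        = softBellman α γ R p P Q x :=
  greedy_pair_consistency_general α γ hα R p P hP_pos Q
end

section
/- The optimal soft Q-function is the evaluation of its greedy pair (Theorems 1 and 2 combined, sequential form): let Q* be the unique fixed point of the soft Bellman operator 𝒯, and let π*(s,b,a) = exp(Q*(s,a,b)/α)/∑_{a'} exp(Q*(s,a',b)/α) and ρ*(s,b) = P(s,b)·(∑_a exp(Q*(s,a,b)/α))^α / ∑_{b'} P(s,b')·(∑_a exp(Q*(s,a,b')/α))^α. Then Q* is also the unique fixed point of the policy-evaluation operator 𝒯_{π*,ρ*}; equivalently, Q*(s,a,b) = R(s,a,b) + γ·∑_{s'} p(s,a,b,s')·( ∑_{b'} ρ*(s',b')·( ∑_{a'} π*(s',b',a')·(Q*(s',a',b') − α·log π*(s',b',a')) ) − ∑_{b'} ρ*(s',b')·log(ρ*(s',b')/P(s',b')) ) for all (s,a,b). -/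
open Finset

noncomputable def gibbs {ι : Type*} [Fintype ι] (q v : ι → ℝ) (i : ι) : ℝ :=
  q i * Real.exp (v i) / ∑ j, q j * Real.exp (v j)

section Gibbs

variable {ι : Type*} [Fintype ι] [Nonempty ι] {q : ι → ℝ} (v : ι → ℝ)

theorem gibbs_partition_pos (hq : ∀ i, 0 < q i) : 0 < ∑ j, q j * Real.exp (v j) :=
  sum_pos (fun j _ => mul_pos (hq j) (Real.exp_pos _)) univ_nonempty

theorem gibbs_pos (hq : ∀ i, 0 < q i) (i : ι) : 0 < gibbs q v i :=
  div_pos (mul_pos (hq i) (Real.exp_pos _)) (gibbs_partition_pos v hq)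

theorem sum_gibbs (hq : ∀ i, 0 < q i) : ∑ i, gibbs q v i = 1 := by
  simp only [gibbs]
  rw [← sum_div, div_self (gibbs_partition_pos v hq).ne']

theorem log_gibbs_div (hq : ∀ i, 0 < q i) (i : ι) :
    Real.log (gibbs q v i / q i) = v i - Real.log (∑ j, q j * Real.exp (v j)) := by
  rw [gibbs, div_div, mul_comm _ (q i), ← div_div, mul_div_cancel_left₀ _ (hq i).ne',
    Real.log_div (Real.exp_ne_zero _) (gibbs_partition_pos v hq).ne', Real.log_exp]

theorem sum_gibbs_mul_sub_log_div (hq : ∀ i, 0 < q i) :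
    ∑ i, gibbs q v i * (v i - Real.log (gibbs q v i / q i))
      = Real.log (∑ j, q j * Real.exp (v j)) := by
  simp only [log_gibbs_div v hq, sub_sub_cancel, ← sum_mul, sum_gibbs v hq, one_mul]

end Gibbs

section Greedy

variable {S A B : Type*} [Fintype A] {α : ℝ} (Q : S × A × B → ℝ)

theorem greedyPolicy_eq_gibbs (s : S) (b : B) :
    greedyPolicy α Q s b = gibbs 1 (fun a => Q (s, a, b) / α) := by
  funext a
  simp only [greedyPolicy, gibbs, Pi.one_apply, one_mul]

variable [Nonempty A]

theorem greedyPolicy_pos (s : S) (b : B) (a : A) : 0 < greedyPolicy α Q s b a := by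
  rw [greedyPolicy_eq_gibbs]
  exact gibbs_pos _ (fun _ => one_pos) a

theorem sum_greedyPolicy (s : S) (b : B) : ∑ a, greedyPolicy α Q s b a = 1 := by
  rw [greedyPolicy_eq_gibbs]
  exact sum_gibbs _ (fun _ => one_pos)

theorem sum_greedyPolicy_mul_sub_log (hα : α ≠ 0) (s : S) (b : B) :
    ∑ a, greedyPolicy α Q s b a * (Q (s, a, b) - α * Real.log (greedyPolicy α Q s b a))
      = α * Real.log (∑ a, Real.exp (Q (s, a, b) / α)) := by
  have h := sum_gibbs_mul_sub_log_div (q := 1) (fun a => Q (s, a, b) / α) (fun _ => one_pos)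
  simp only [Pi.one_apply, div_one, one_mul] at h
  rw [greedyPolicy_eq_gibbs, ← h, mul_sum]
  refine sum_congr rfl fun a _ => ?_
  field_simp

theorem rpow_sum_exp_div (s : S) (b : B) :
    (∑ a, Real.exp (Q (s, a, b) / α)) ^ α
      = Real.exp (α * Real.log (∑ a, Real.exp (Q (s, a, b) / α))) := by
  rw [Real.rpow_def_of_pos (sum_pos (fun a _ => Real.exp_pos _) univ_nonempty), mul_comm]

variable [Fintype B]

theorem greedyOpponent_eq_gibbs (P : S → B → ℝ) (s : S) :
    greedyOpponent α P Q s
      = gibbs (P s) (fun b => α * Real.log (∑ a, Real.exp (Q (s, a, b) / α))) := by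
  funext b
  simp only [greedyOpponent, gibbs, rpow_sum_exp_div]

variable [Nonempty B] {P : S → B → ℝ} (hP : ∀ s b, 0 < P s b)
include hP

theorem greedyOpponent_pos (s : S) (b : B) : 0 < greedyOpponent α P Q s b := by
  rw [greedyOpponent_eq_gibbs]
  exact gibbs_pos _ (hP s) b

theorem sum_greedyOpponent (s : S) : ∑ b, greedyOpponent α P Q s b = 1 := by
  rw [greedyOpponent_eq_gibbs]
  exact sum_gibbs _ (hP s)

theorem sum_greedyOpponent_mul_sub_log_div (s : S) :
    ∑ b, greedyOpponent α P Q s b * (α * Real.log (∑ a, Real.exp (Q (s, a, b) / α)))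
      - ∑ b, greedyOpponent α P Q s b * Real.log (greedyOpponent α P Q s b / P s b)
      = Real.log (∑ b, P s b * (∑ a, Real.exp (Q (s, a, b) / α)) ^ α) := by
  simp only [rpow_sum_exp_div]
  rw [← sum_gibbs_mul_sub_log_div _ (hP s), ← greedyOpponent_eq_gibbs, ← sum_sub_distrib]
  simp only [mul_sub]

variable [Fintype S]

theorem evalOp_greedy_eq_softBellman (hα : α ≠ 0) (γ : ℝ) (R : S × A × B → ℝ)
    (p : S → A → B → S → ℝ) :
    evalOp α γ R p P (greedyPolicy α Q) (greedyOpponent α P Q) Q = softBellman α γ R p P Q := by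
  funext x
  simp only [evalOp, softBellman, sum_greedyPolicy_mul_sub_log Q hα,
    sum_greedyOpponent_mul_sub_log_div Q hP]

end Greedy

section Evaluation

theorem abs_sum_mul_le_of_sum_eq_one {ι : Type*} [Fintype ι] {w f : ι → ℝ} {M : ℝ}
    (hw : ∀ i, 0 ≤ w i) (hw₁ : ∑ i, w i = 1) (hf : ∀ i, |f i| ≤ M) :
    |∑ i, w i * f i| ≤ M :=
  calc |∑ i, w i * f i| ≤ ∑ i, w i * |f i| := by
        simpa only [abs_mul, abs_of_nonneg (hw _)] using
          abs_sum_le_sum_abs (fun i => w i * f i) univ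
    _ ≤ ∑ i, w i * M := sum_le_sum fun i _ => mul_le_mul_of_nonneg_left (hf i) (hw i)
    _ = M := by rw [← sum_mul, hw₁, one_mul]

variable {S A B : Type*} [Fintype S] [Fintype A] [Fintype B] {α γ : ℝ} {R : S × A × B → ℝ}
  {p : S → A → B → S → ℝ} {P : S → B → ℝ} {π : S → B → A → ℝ} {ρ : S → B → ℝ}

theorem evalOp_sub_evalOp (Q Q' : S × A × B → ℝ) (x : S × A × B) :
    evalOp α γ R p P π ρ Q x - evalOp α γ R p P π ρ Q' x
      = γ * ∑ s', p x.1 x.2.1 x.2.2 s' *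
          ∑ b', ρ s' b' * ∑ a', π s' b' a' * (Q (s', a', b') - Q' (s', a', b')) := by
  simp only [evalOp, mul_sub, sum_sub_distrib]
  ring

theorem dist_evalOp_le (hγ : 0 ≤ γ) (hp₀ : ∀ s a b s', 0 ≤ p s a b s')
    (hp₁ : ∀ s a b, ∑ s', p s a b s' = 1) (hπ₀ : ∀ s b a, 0 ≤ π s b a)
    (hπ₁ : ∀ s b, ∑ a, π s b a = 1) (hρ₀ : ∀ s b, 0 ≤ ρ s b) (hρ₁ : ∀ s, ∑ b, ρ s b = 1)
    (Q Q' : S × A × B → ℝ) :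
    dist (evalOp α γ R p P π ρ Q) (evalOp α γ R p P π ρ Q') ≤ γ * dist Q Q' := by
  refine (dist_pi_le_iff (by positivity)).2 fun x => ?_
  have hQ (y : S × A × B) : |Q y - Q' y| ≤ dist Q Q' := dist_le_pi_dist Q Q' y
  rw [Real.dist_eq, evalOp_sub_evalOp, abs_mul, abs_of_nonneg hγ]
  gcongr
  exact abs_sum_mul_le_of_sum_eq_one (hp₀ _ _ _) (hp₁ _ _ _) fun s' =>
    abs_sum_mul_le_of_sum_eq_one (hρ₀ s') (hρ₁ s') fun b' =>
      abs_sum_mul_le_of_sum_eq_one (hπ₀ s' b') (hπ₁ s' b') fun a' => hQ _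

theorem contractingWith_evalOp (hγ₀ : 0 ≤ γ) (hγ₁ : γ < 1) (hp₀ : ∀ s a b s', 0 ≤ p s a b s')
    (hp₁ : ∀ s a b, ∑ s', p s a b s' = 1) (hπ₀ : ∀ s b a, 0 ≤ π s b a)
    (hπ₁ : ∀ s b, ∑ a, π s b a = 1) (hρ₀ : ∀ s b, 0 ≤ ρ s b) (hρ₁ : ∀ s, ∑ b, ρ s b = 1) :
    ContractingWith ⟨γ, hγ₀⟩ (evalOp α γ R p P π ρ) :=
  ⟨NNReal.coe_lt_coe.mp hγ₁, LipschitzWith.of_dist_le_mul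
    (dist_evalOp_le hγ₀ hp₀ hp₁ hπ₀ hπ₁ hρ₀ hρ₁)⟩

end Evaluation

theorem optimal_Q_is_evaluation_of_greedy_pair_general
    {S A B : Type*} [Fintype S] [Fintype A] [Fintype B]
    [Nonempty A] [Nonempty B]
    (α γ : ℝ) (hα : 0 < α) (hγ₀ : 0 ≤ γ) (hγ₁ : γ < 1)
    (R : S × A × B → ℝ)
    (p : S → A → B → S → ℝ)
    (hp_nonneg : ∀ s a b s', 0 ≤ p s a b s') (hp_sum : ∀ s a b, ∑ s', p s a b s' = 1)
    (P : S → B → ℝ) (hP_pos : ∀ s b, 0 < P s b)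
    (Qstar : S × A × B → ℝ)
    (hQstar : softBellman α γ R p P Qstar = Qstar) :
    evalOp α γ R p P (greedyPolicy α Qstar) (greedyOpponent α P Qstar) Qstar = Qstar
    ∧ (∀ Q : S × A × B → ℝ,
        evalOp α γ R p P (greedyPolicy α Qstar) (greedyOpponent α P Qstar) Q = Q
          → Q = Qstar) := by
  have hfix : evalOp α γ R p P (greedyPolicy α Qstar) (greedyOpponent α P Qstar) Qstar = Qstar :=
    (evalOp_greedy_eq_softBellman Qstar hP_pos hα.ne' γ R p).trans hQstar
  have hcontr : ContractingWith ⟨γ, hγ₀⟩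
      (evalOp α γ R p P (greedyPolicy α Qstar) (greedyOpponent α P Qstar)) :=
    contractingWith_evalOp hγ₀ hγ₁ hp_nonneg hp_sum
      (fun s b a => (greedyPolicy_pos Qstar s b a).le) (sum_greedyPolicy Qstar)
      (fun s b => (greedyOpponent_pos Qstar hP_pos s b).le) (sum_greedyOpponent Qstar hP_pos)
  exact ⟨hfix, fun Q hQ => hcontr.fixedPoint_unique' hQ hfix⟩

/-- The optimal soft Q-function is the evaluation of its greedy pair:
if Q* is the (unique) fixed point of the soft Bellman operator 𝒯, then Q* is also
the unique fixed point of the policy-evaluation operator 𝒯_{π*,ρ*} for the greedy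
pair π*, ρ* of Q*; equivalently Q* satisfies the displayed fixed-point equation. -/
theorem optimal_Q_is_evaluation_of_greedy_pair
    {S A B : Type*} [Fintype S] [Fintype A] [Fintype B]
    [Nonempty S] [Nonempty A] [Nonempty B]
    (α γ : ℝ) (hα : 0 < α) (hγ₀ : 0 ≤ γ) (hγ₁ : γ < 1)
    (R : S × A × B → ℝ)
    (p : S → A → B → S → ℝ)
    (hp_nonneg : ∀ s a b s', 0 ≤ p s a b s') (hp_sum : ∀ s a b, ∑ s', p s a b s' = 1)
    (P : S → B → ℝ) (hP_pos : ∀ s b, 0 < P s b) (hP_sum : ∀ s, ∑ b, P s b = 1)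
    (Qstar : S × A × B → ℝ)
    (hQstar : softBellman α γ R p P Qstar = Qstar) :
    evalOp α γ R p P (greedyPolicy α Qstar) (greedyOpponent α P Qstar) Qstar = Qstar
    ∧ (∀ Q : S × A × B → ℝ,
        evalOp α γ R p P (greedyPolicy α Qstar) (greedyOpponent α P Qstar) Q = Q
          → Q = Qstar) :=
  optimal_Q_is_evaluation_of_greedy_pair_general α γ hα hγ₀ hγ₁ R p hp_nonneg hp_sum P hP_pos Qstar
    hQstar
end
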